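/- arXiv:2502.02803 — 6 statements merged into one kernel-verified Lean document; each statement's English description precedes it below -/
import Mathlib

section
/- Let a ∈ ℂ with |a| ≠ 1. Then ∫_0^1 e^{2πit}/(e^{2πit} + a) dt equals 0 if |a| > 1, and equals 1 if |a| < 1. -/
open Real Complex Metric

/-!
Substituting `z = e^{2πit}` turns the integral into `(2πi)⁻¹ ∮_{|z|=1} dz / (z + a)`. When
`|a| < 1` the pole `-a` lies inside the circle and the contour integral is `2πi`; when `|a| > 1`
the integrand is holomorphic on the closed disc and Cauchy's theorem gives `0`.
-/

theorem intervalIntegral_exp_two_pi_I_smul_eq_circleIntegral {E : Type*} [NormedAddCommGroup E]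
    [NormedSpace ℂ E] (g : ℂ → E) :
    ∫ t in (0:ℝ)..1, exp (2 * π * I * t) • g (exp (2 * π * I * t)) =
      (2 * π * I)⁻¹ • ∮ z in C(0, 1), g z := by
  have h2pi : (2 * π : ℝ) ≠ 0 := by positivity
  have hexp : ∀ t : ℝ, exp (2 * π * I * t) = circleMap 0 1 (2 * π * t) := fun t => by
    simp only [circleMap_zero, ofReal_one, one_mul, ofReal_mul, ofReal_ofNat]
    ring_nf
  calc ∫ t in (0:ℝ)..1, exp (2 * π * I * t) • g (exp (2 * π * I * t))
      = ∫ t in (0:ℝ)..1, circleMap 0 1 (2 * π * t) • g (circleMap 0 1 (2 * π * t)) := by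
        simp only [hexp]
    _ = (2 * π)⁻¹ • ∫ θ in (0:ℝ)..2 * π, circleMap 0 1 θ • g (circleMap 0 1 θ) := by
        simpa only [mul_zero, mul_one] using intervalIntegral.integral_comp_mul_left
          (a := 0) (b := 1) (fun θ => circleMap 0 1 θ • g (circleMap 0 1 θ)) h2pi
    _ = (2 * π * I)⁻¹ • ∮ z in C(0, 1), g z := by
        simp only [circleIntegral, deriv_circleMap, smul_comm _ I, mul_smul,
          intervalIntegral.integral_smul]
        rw [← Complex.coe_smul, smul_smul]
        congr 1
        push_cast
        field_simp

theorem circleIntegral_sub_inv_of_notMem_closedBall {c w : ℂ} {R : ℝ} (hR : 0 ≤ R)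
    (hw : w ∉ closedBall c R) : ∮ z in C(c, R), (z - w)⁻¹ = 0 :=
  DiffContOnCl.circleIntegral_eq_zero hR <| DifferentiableOn.diffContOnCl_ball
    ((differentiableOn_id.sub_const w).inv fun _ hz => sub_ne_zero.2 (ne_of_mem_of_not_mem hz hw))
    subset_rfl

theorem integral_indicator_unit_disc_general (a : ℂ) :
    (‖a‖ > 1 →
      ∫ t in (0:ℝ)..1,
          Complex.exp (2 * π * Complex.I * t) /
            (Complex.exp (2 * π * Complex.I * t) + a) = 0) ∧
    (‖a‖ < 1 →
      ∫ t in (0:ℝ)..1,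
          Complex.exp (2 * π * Complex.I * t) /
            (Complex.exp (2 * π * Complex.I * t) + a) = 1) := by
  have hsubst : ∫ t in (0:ℝ)..1,
      exp (2 * π * I * t) / (exp (2 * π * I * t) + a) =
        (2 * π * I)⁻¹ * ∮ z in C(0, 1), (z - -a)⁻¹ := by
    simpa only [smul_eq_mul, div_eq_mul_inv, sub_neg_eq_add] using
      intervalIntegral_exp_two_pi_I_smul_eq_circleIntegral fun z => (z + a)⁻¹
  refine ⟨fun ha => ?_, fun ha => ?_⟩
  · rw [hsubst, circleIntegral_sub_inv_of_notMem_closedBall zero_le_one (by simpa using ha),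
      mul_zero]
  · rw [hsubst, circleIntegral.integral_sub_inv_of_mem_ball (by simpa using ha),
      inv_mul_cancel₀ (by simp [pi_ne_zero])]

theorem integral_indicator_unit_disc (a : ℂ) (ha : ‖a‖ ≠ 1) :
    (‖a‖ > 1 →
      ∫ t in (0:ℝ)..1,
          Complex.exp (2 * π * Complex.I * t) /
            (Complex.exp (2 * π * Complex.I * t) + a) = 0) ∧
    (‖a‖ < 1 →
      ∫ t in (0:ℝ)..1,
          Complex.exp (2 * π * Complex.I * t) /
            (Complex.exp (2 * π * Complex.I * t) + a) = 1) :=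
  integral_indicator_unit_disc_general a
end

section
/- Let φ : ℂ × ℂ → ℂ be continuous (on the unit torus, i.e. on the set of pairs (z,w) with |z| = |w| = 1). Then lim_{n→∞} ∫_0^1 φ(e^{2πit}, e^{2πint}) dt = ∫_0^1 ∫_0^1 φ(e^{2πit}, e^{2πis}) dt ds. -/
/-!
Push Lebesgue measure on `(0, 1]` forward to the torus `ℝ² / ℤ²` along `t ↦ (t, n t)`: the claim
is that these measures converge weakly to Haar measure. Against a character `(t, s) ↦ e(a t + b s)`
the `n`-th integral is `δ(a + n b)`, which for `b ≠ 0` vanishes as soon as `n > |a|`, and otherwise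
equals the Haar integral `δ(a) δ(b)`. Trigonometric polynomials are dense in `C(𝕋², ℂ)`
(Stone–Weierstrass) and all the integration functionals are 1-Lipschitz, so the convergence passes
to every continuous function.
-/

open Real Complex Filter MeasureTheory Topology

section DenseSpan

variable {𝕜 E F ι : Type*} [NormedField 𝕜] [SeminormedAddCommGroup E] [NormedSpace 𝕜 E]
  [SeminormedAddCommGroup F] [NormedSpace 𝕜 F] {l : Filter ι}

theorem LinearMap.tendsto_of_tendsto_of_span_dense {Λ : ι → E →ₗ[𝕜] F} {Λ₀ : E →ₗ[𝕜] F}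
    {K : NNReal} (hΛ : ∀ i, LipschitzWith K (Λ i)) (hΛ₀ : Continuous Λ₀) {s : Set E}
    (hs : (Submodule.span 𝕜 s).topologicalClosure = ⊤)
    (h : ∀ x ∈ s, Tendsto (Λ · x) l (𝓝 (Λ₀ x))) (x : E) :
    Tendsto (Λ · x) l (𝓝 (Λ₀ x)) := by
  let V : Submodule 𝕜 E :=
    { carrier := {x | Tendsto (Λ · x) l (𝓝 (Λ₀ x))}
      add_mem' := fun hx hy => by simpa using hx.add hy
      zero_mem' := by simpa using tendsto_const_nhds
      smul_mem' := fun c _ hx => by simpa using hx.const_smul c }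
  have hV : IsClosed (V : Set E) :=
    (LipschitzWith.uniformEquicontinuous _ K hΛ).equicontinuous.isClosed_setOfPred_tendsto hΛ₀
  have hle :=
    Submodule.topologicalClosure_minimal _ (Submodule.span_le.mpr fun x hx => h x hx) hV
  exact hle (hs ▸ Submodule.mem_top)

end DenseSpan

namespace ContinuousMap

variable {X : Type*} [TopologicalSpace X] [CompactSpace X] [MeasurableSpace X]
  [OpensMeasurableSpace X] (μ : Measure X) [IsFiniteMeasure μ]

theorem integrable (g : C(X, ℂ)) : Integrable g μ :=
  (BoundedContinuousFunction.mkOfCompact g).integrable μ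

noncomputable def integralₗ : C(X, ℂ) →ₗ[ℂ] ℂ where
  toFun g := ∫ x, g x ∂μ
  map_add' g h := integral_add (g.integrable μ) (h.integrable μ)
  map_smul' c _ := integral_smul c _

@[simp]
theorem integralₗ_apply (g : C(X, ℂ)) : integralₗ μ g = ∫ x, g x ∂μ := rfl

theorem lipschitzWith_integralₗ [IsProbabilityMeasure μ] : LipschitzWith 1 (integralₗ μ) := by
  simpa using AddMonoidHomClass.lipschitz_of_bound (integralₗ μ) 1 fun g => by
    simpa using (BoundedContinuousFunction.mkOfCompact g).norm_integral_le_norm μ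

end ContinuousMap

theorem intervalIntegral_fourier (k : ℤ) :
    ∫ t in (0:ℝ)..1, fourier k (t : UnitAddCircle) = if k = 0 then 1 else 0 := by
  split_ifs with hk
  · simp [hk]
  have hc : 2 * π * I * k ≠ 0 := by simp [hk, pi_ne_zero]
  simp only [fourier_coe_apply, ofReal_one, div_one]
  rw [integral_exp_mul_complex hc]
  have : cexp (2 * π * I * k) = 1 := by
    simpa [mul_comm] using exp_int_mul_two_pi_mul_I k
  simp [this]

theorem Int.eventually_add_nat_mul_ne_zero (a : ℤ) {b : ℤ} (hb : b ≠ 0) :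
    ∀ᶠ n : ℕ in atTop, a + n * b ≠ 0 := by
  filter_upwards [eventually_gt_atTop a.natAbs] with n hn h
  have : n * b.natAbs = a.natAbs := by
    simpa [Int.natAbs_mul] using congrArg Int.natAbs (eq_neg_of_add_eq_zero_right h)
  have := Int.natAbs_pos.mpr hb
  nlinarith

theorem UnitAddCircle.coe_toCircle_coe (t : ℝ) :
    (AddCircle.toCircle (t : UnitAddCircle) : ℂ) = cexp (2 * π * I * t) := by
  rw [← fourier_one, fourier_coe_apply]
  simp

instance : IsProbabilityMeasure (volume.restrict (Set.Ioc (0:ℝ) 1)) := ⟨by simp⟩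

namespace UnitAddTorus

abbrev mk₂ (t s : ℝ) : UnitAddTorus (Fin 2) := ![(t : UnitAddCircle), (s : UnitAddCircle)]

noncomputable def windingMeasure (n : ℕ) : Measure (UnitAddTorus (Fin 2)) :=
  (volume.restrict (Set.Ioc (0:ℝ) 1)).map fun t => mk₂ t (n * t)

-- The square is parametrised by `(s, t)`, so that Fubini gives the iterated integral `∫ ds ∫ dt`.
noncomputable def squareMeasure : Measure (UnitAddTorus (Fin 2)) :=
  ((volume.restrict (Set.Ioc (0:ℝ) 1)).prod (volume.restrict (Set.Ioc (0:ℝ) 1))).map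
    fun p => mk₂ p.2 p.1

instance (n : ℕ) : IsProbabilityMeasure (windingMeasure n) :=
  Measure.isProbabilityMeasure_map (by fun_prop)

instance : IsProbabilityMeasure squareMeasure :=
  Measure.isProbabilityMeasure_map (by fun_prop)

theorem integral_windingMeasure (g : C(UnitAddTorus (Fin 2), ℂ)) (n : ℕ) :
    ∫ x, g x ∂windingMeasure n = ∫ t in (0:ℝ)..1, g (mk₂ t (n * t)) := by
  rw [windingMeasure, integral_map (by fun_prop) g.continuous.aestronglyMeasurable,
    intervalIntegral.integral_of_le zero_le_one]

theorem integral_squareMeasure (g : C(UnitAddTorus (Fin 2), ℂ)) :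
    ∫ x, g x ∂squareMeasure = ∫ s in (0:ℝ)..1, ∫ t in (0:ℝ)..1, g (mk₂ t s) := by
  have hmeas : Measurable fun p : ℝ × ℝ => mk₂ p.2 p.1 := by fun_prop
  rw [squareMeasure, integral_map hmeas.aemeasurable g.continuous.aestronglyMeasurable,
    integral_prod (fun p => g (mk₂ p.2 p.1)) ((g.integrable _).comp_measurable hmeas)]
  simp only [intervalIntegral.integral_of_le zero_le_one]

theorem mFourier_mk₂ (m : Fin 2 → ℤ) (t s : ℝ) :
    mFourier m (mk₂ t s) =
      fourier (m 0) (t : UnitAddCircle) * fourier (m 1) (s : UnitAddCircle) := by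
  simp [mFourier, Fin.prod_univ_two]

theorem mFourier_mk₂_nat_mul (m : Fin 2 → ℤ) (n : ℕ) (t : ℝ) :
    mFourier m (mk₂ t (n * t)) = fourier (m 0 + n * m 1) (t : UnitAddCircle) := by
  simp only [mFourier_mk₂, fourier_coe_apply, ← Complex.exp_add]
  congr 1
  push_cast
  ring

theorem integral_mFourier_windingMeasure (m : Fin 2 → ℤ) (n : ℕ) :
    ∫ x, mFourier m x ∂windingMeasure n = if m 0 + n * m 1 = 0 then 1 else 0 := by
  simp only [integral_windingMeasure, mFourier_mk₂_nat_mul, intervalIntegral_fourier]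

theorem integral_mFourier_squareMeasure (m : Fin 2 → ℤ) :
    ∫ x, mFourier m x ∂squareMeasure =
      (if m 1 = 0 then 1 else 0) * if m 0 = 0 then 1 else 0 := by
  simp only [integral_squareMeasure, mFourier_mk₂, intervalIntegral.integral_const_mul,
    intervalIntegral.integral_mul_const, intervalIntegral_fourier]
  ring

theorem tendsto_integral_mFourier_windingMeasure (m : Fin 2 → ℤ) :
    Tendsto (fun n => ∫ x, mFourier m x ∂windingMeasure n) atTop
      (𝓝 (∫ x, mFourier m x ∂squareMeasure)) := by
  simp only [integral_mFourier_windingMeasure, integral_mFourier_squareMeasure]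
  by_cases hm : m 1 = 0
  · simp [hm]
  · rw [if_neg hm, zero_mul]
    refine tendsto_const_nhds.congr' ?_
    filter_upwards [Int.eventually_add_nat_mul_ne_zero (m 0) hm] with n hn
    rw [if_neg hn]

theorem tendsto_integral_windingMeasure (g : C(UnitAddTorus (Fin 2), ℂ)) :
    Tendsto (fun n => ∫ x, g x ∂windingMeasure n) atTop (𝓝 (∫ x, g x ∂squareMeasure)) := by
  refine LinearMap.tendsto_of_tendsto_of_span_dense
    (Λ := fun n => ContinuousMap.integralₗ (windingMeasure n))
    (fun n => ContinuousMap.lipschitzWith_integralₗ _)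
    (ContinuousMap.lipschitzWith_integralₗ _).continuous span_mFourier_closure_eq_top ?_ g
  rintro _ ⟨m, rfl⟩
  exact tendsto_integral_mFourier_windingMeasure m

end UnitAddTorus

theorem boyd_lawton_lemma_two_vars
    (φ : ℂ × ℂ → ℂ)
    (hφ : ContinuousOn φ {p : ℂ × ℂ | ‖p.1‖ = 1 ∧ ‖p.2‖ = 1}) :
    Tendsto
      (fun n : ℕ => ∫ t in (0:ℝ)..1,
        φ (Complex.exp (2 * π * Complex.I * t),
           Complex.exp (2 * π * Complex.I * (n * t))))
      atTop
      (nhds (∫ s in (0:ℝ)..1, ∫ t in (0:ℝ)..1,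
        φ (Complex.exp (2 * π * Complex.I * t),
           Complex.exp (2 * π * Complex.I * s)))) := by
  let g : C(UnitAddTorus (Fin 2), ℂ) :=
    ⟨fun x => φ (AddCircle.toCircle (x 0), AddCircle.toCircle (x 1)),
      hφ.comp_continuous (by fun_prop) fun x => ⟨Circle.norm_coe _, Circle.norm_coe _⟩⟩
  have hg (t s : ℝ) :
      g (UnitAddTorus.mk₂ t s) = φ (cexp (2 * π * I * t), cexp (2 * π * I * s)) := by
    simp [g, UnitAddCircle.coe_toCircle_coe]
  have key := UnitAddTorus.tendsto_integral_windingMeasure g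
  simp only [UnitAddTorus.integral_windingMeasure, UnitAddTorus.integral_squareMeasure, hg] at key
  simpa using key
end

section
/- Let f : ℂ × ℂ × ℂ → ℂ be continuous on the unit 3-torus (the set of triples (z₁,z₂,z₃) with |z₁| = |z₂| = |z₃| = 1). Then the iterated limit lim_{n₂→∞} lim_{n₃→∞} ∫_0^1 f(e^{2πit}, e^{2πin₂t}, e^{2πin₃t}) dt exists and equals ∫_0^1 ∫_0^1 ∫_0^1 f(e^{2πit₁}, e^{2πit₂}, e^{2πit₃}) dt₁ dt₂ dt₃. Precisely: for every integer n₂ ≥ 1 the inner limit L(n₂) := lim_{n₃→∞} ∫_0^1 f(e^{2πit}, e^{2πin₂t}, e^{2πin₃t}) dt exists, and L(n₂) tends to the triple integral as n₂ → ∞. -/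
/-!
For a continuous function `φ` on `ℝ²` that is `1`-periodic in each variable, shifting `t` by
`s / n` shifts `n * t` by `s`, so by periodicity
`∫₀¹ φ (t, n t) dt = ∫₀¹ φ (t + s / n, n t + s) dt` for every `s`. Averaging over `s ∈ [0, 1]`
and comparing with `∫₀¹ ∫₀¹ φ (t, s) ds dt = ∫₀¹ ∫₀¹ φ (t, n t + s) dt ds` (periodicity in `s`,
then Fubini) bounds the difference by the modulus of continuity of `φ` in its first variable at
`1 / n`, which is uniform by compactness of the period square. Applied to
`f (e t, e (n₂ t), e s)` as `n₃ → ∞` and to `∫₀¹ f (e t, e u, e s) ds` as `n₂ → ∞`, where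
`e x = exp (2 π i x)`, this gives both limits.
-/

open Real Complex Filter MeasureTheory Set Topology Interval Function

theorem eventually_forall_dist_shift_fst_lt {E : Type*} [PseudoMetricSpace E] {φ : ℝ × ℝ → E}
    (hφ : Continuous φ) (h₂ : ∀ t, Periodic (fun s => φ (t, s)) 1) {ε : ℝ} (hε : 0 < ε) :
    ∀ᶠ h in 𝓝 (0 : ℝ), ∀ t ∈ Icc (0 : ℝ) 1, ∀ s, dist (φ (t + h, s)) (φ (t, s)) < ε := by
  obtain ⟨v, hv, hvε⟩ := (isCompact_Icc.prod isCompact_Icc).mem_uniformity_of_prod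
    (f := fun h (p : ℝ × ℝ) => φ (p.1 + h, p.2)) (s := univ) (q := 0)
    (by fun_prop) (mem_univ _) (Metric.dist_mem_uniformity hε)
  rw [nhdsWithin_univ] at hv
  filter_upwards [hv] with h hh t ht s
  have hfract : ∀ x, φ (x, s) = φ (x, Int.fract s) := fun x => by
    simpa [← Int.self_sub_floor] using ((h₂ x).sub_int_mul_eq ⌊s⌋).symm
  rw [hfract, hfract]
  simpa using hvε h hh (t, Int.fract s) ⟨ht, Int.fract_nonneg s, (Int.fract_lt_one s).le⟩

section

variable {E : Type*} [NormedAddCommGroup E] [NormedSpace ℝ E]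

theorem intervalIntegral_integral_swap_of_continuous {F : ℝ × ℝ → E} (hF : Continuous F)
    {a b c d : ℝ} (hab : a ≤ b) (hcd : c ≤ d) :
    ∫ x in a..b, ∫ y in c..d, F (x, y) = ∫ y in c..d, ∫ x in a..b, F (x, y) := by
  simp only [intervalIntegral.integral_of_le hab, intervalIntegral.integral_of_le hcd]
  apply integral_integral_swap
  rw [Measure.prod_restrict, ← Measure.volume_eq_prod]
  exact (hF.continuousOn.integrableOn_compact (isCompact_Icc.prod isCompact_Icc)).mono_set
    (prod_mono Ioc_subset_Icc_self Ioc_subset_Icc_self)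

variable {φ : ℝ × ℝ → E}

theorem integral_comp_nat_mul_eq_integral_shift (h₁ : ∀ s, Periodic (fun t => φ (t, s)) 1)
    (h₂ : ∀ t, Periodic (fun s => φ (t, s)) 1) {n : ℕ} (hn : n ≠ 0) (s : ℝ) :
    ∫ t in (0 : ℝ)..1, φ (t, n * t) = ∫ t in (0 : ℝ)..1, φ (t + s / n, n * t + s) := by
  have hper : Periodic (fun t : ℝ => φ (t, n * t)) 1 := fun t => by
    have h := (h₂ (t + 1)).nat_mul n (n * t)
    simp only [mul_one] at h
    simp only [mul_add, mul_one, h, h₁ _ t]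
  have hshift : ∀ t : ℝ, (n : ℝ) * t + s = n * (t + s / n) := fun t => by
    field_simp
  simp_rw [hshift]
  rw [intervalIntegral.integral_comp_add_right (fun t => φ (t, n * t)), zero_add, add_comm 1,
    hper.intervalIntegral_add_eq, zero_add]

theorem norm_integral_comp_nat_mul_sub_integral_add_le (hφ : Continuous φ)
    (h₁ : ∀ s, Periodic (fun t => φ (t, s)) 1) (h₂ : ∀ t, Periodic (fun s => φ (t, s)) 1)
    {n : ℕ} (hn : n ≠ 0) {s ε : ℝ}
    (hε : ∀ t ∈ Icc (0 : ℝ) 1, ∀ y, dist (φ (t + s / n, y)) (φ (t, y)) ≤ ε) :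
    ‖(∫ t in (0 : ℝ)..1, φ (t, n * t)) - ∫ t in (0 : ℝ)..1, φ (t, n * t + s)‖ ≤ ε := by
  rw [integral_comp_nat_mul_eq_integral_shift h₁ h₂ hn s,
    ← intervalIntegral.integral_sub
      ((by fun_prop : Continuous fun t => φ (t + s / n, n * t + s)).intervalIntegrable 0 1)
      ((by fun_prop : Continuous fun t => φ (t, n * t + s)).intervalIntegrable 0 1)]
  refine (intervalIntegral.norm_integral_le_of_norm_le_const (C := ε) fun t ht => ?_).trans_eq
    (by simp)
  rw [← dist_eq_norm]
  exact hε t (Ioc_subset_Icc_self (by simpa using ht)) _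

theorem integral_integral_eq_integral_integral_comp_add (hφ : Continuous φ)
    (h₂ : ∀ t, Periodic (fun s => φ (t, s)) 1) {a : ℝ → ℝ} (ha : Continuous a) :
    ∫ t in (0 : ℝ)..1, ∫ s in (0 : ℝ)..1, φ (t, s) =
      ∫ s in (0 : ℝ)..1, ∫ t in (0 : ℝ)..1, φ (t, a t + s) := by
  calc _ = ∫ t in (0 : ℝ)..1, ∫ s in (0 : ℝ)..1, φ (t, a t + s) := by
        refine intervalIntegral.integral_congr fun t _ => ?_
        rw [intervalIntegral.integral_comp_add_left (fun s => φ (t, s)), add_zero,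
          (h₂ t).intervalIntegral_add_eq, zero_add]
    _ = _ := intervalIntegral_integral_swap_of_continuous
        (F := fun p => φ (p.1, a p.1 + p.2)) (by fun_prop) zero_le_one zero_le_one

theorem tendsto_integral_comp_nat_mul [CompleteSpace E] (hφ : Continuous φ)
    (h₁ : ∀ s, Periodic (fun t => φ (t, s)) 1) (h₂ : ∀ t, Periodic (fun s => φ (t, s)) 1) :
    Tendsto (fun n : ℕ => ∫ t in (0 : ℝ)..1, φ (t, n * t)) atTop
      (𝓝 (∫ t in (0 : ℝ)..1, ∫ s in (0 : ℝ)..1, φ (t, s))) := by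
  rw [Metric.tendsto_atTop]
  intro ε hε
  obtain ⟨δ, hδ, hshift⟩ := Metric.eventually_nhds_iff.mp
    (eventually_forall_dist_shift_fst_lt hφ h₂ (half_pos hε))
  obtain ⟨N, hN⟩ := exists_nat_one_div_lt hδ
  refine ⟨N + 1, fun n hn => ?_⟩
  have hn0 : n ≠ 0 := by omega
  have hsmall : ∀ s ∈ Ι (0 : ℝ) 1, dist (s / n) 0 < δ := by
    intro s hs
    rw [uIoc_of_le zero_le_one] at hs
    have hn' : (N : ℝ) + 1 ≤ n := by exact_mod_cast hn
    rw [Real.dist_0_eq_abs, abs_of_nonneg (div_nonneg hs.1.le n.cast_nonneg)]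
    calc s / n ≤ 1 / n := by gcongr; exact hs.2
      _ ≤ 1 / (N + 1) := by gcongr
      _ < δ := hN
  have hinner : Continuous fun s => ∫ t in (0 : ℝ)..1, φ (t, n * t + s) :=
    intervalIntegral.continuous_parametric_intervalIntegral_of_continuous'
      (f := fun s t => φ (t, n * t + s)) (by fun_prop) 0 1
  calc dist (∫ t in (0 : ℝ)..1, φ (t, n * t)) (∫ t in (0 : ℝ)..1, ∫ s in (0 : ℝ)..1, φ (t, s))
      = ‖∫ s in (0 : ℝ)..1,
          ((∫ t in (0 : ℝ)..1, φ (t, n * t)) - ∫ t in (0 : ℝ)..1, φ (t, n * t + s))‖ := by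
        rw [dist_eq_norm, intervalIntegral.integral_sub intervalIntegrable_const
          (hinner.intervalIntegrable 0 1), intervalIntegral.integral_const,
          integral_integral_eq_integral_integral_comp_add hφ h₂ (a := fun t => n * t)
            (by fun_prop)]
        simp
    _ ≤ ε / 2 := by
        refine (intervalIntegral.norm_integral_le_of_norm_le_const (C := ε / 2)
          fun s hs => ?_).trans_eq
          (by simp)
        exact norm_integral_comp_nat_mul_sub_integral_add_le hφ h₁ h₂ hn0
          fun t ht y => (hshift (hsmall s hs) t ht y).le
    _ < ε := half_lt_self hε

end

theorem exp_two_pi_I_mul_periodic : Periodic (fun x : ℝ => exp (2 * π * I * x)) 1 :=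
  fun x => by simp [mul_add, Complex.exp_add]

theorem exp_two_pi_I_mul_add_natCast (x : ℝ) (n : ℕ) :
    exp (2 * π * I * (x + n : ℝ)) = exp (2 * π * I * x) := by
  simpa using exp_two_pi_I_mul_periodic.nat_mul n x

theorem norm_exp_two_pi_I_mul (x : ℝ) : ‖exp (2 * π * I * x)‖ = 1 := by
  rw [norm_exp]; simp

theorem ContinuousOn.comp_exp_two_pi_I_mul {F X : Type*} [TopologicalSpace F] [TopologicalSpace X]
    {f : ℂ × ℂ × ℂ → F}
    (hf : ContinuousOn f {p : ℂ × ℂ × ℂ | ‖p.1‖ = 1 ∧ ‖p.2.1‖ = 1 ∧ ‖p.2.2‖ = 1})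
    {a b c : X → ℝ} (ha : Continuous a) (hb : Continuous b) (hc : Continuous c) :
    Continuous fun x => f (exp (2 * π * I * a x), exp (2 * π * I * b x), exp (2 * π * I * c x)) :=
  hf.comp_continuous (by fun_prop) fun x =>
    ⟨norm_exp_two_pi_I_mul _, norm_exp_two_pi_I_mul _, norm_exp_two_pi_I_mul _⟩

theorem boyd_lawton_lemma_three_vars
    (f : ℂ × ℂ × ℂ → ℂ)
    (hf : ContinuousOn f
      {p : ℂ × ℂ × ℂ | ‖p.1‖ = 1 ∧ ‖p.2.1‖ = 1 ∧
        ‖p.2.2‖ = 1}) :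
    ∃ L : ℕ → ℂ,
      (∀ n₂ : ℕ, 1 ≤ n₂ →
        Tendsto
          (fun n₃ : ℕ => ∫ t in (0:ℝ)..1,
            f (Complex.exp (2 * π * Complex.I * t),
               Complex.exp (2 * π * Complex.I * (n₂ * t)),
               Complex.exp (2 * π * Complex.I * (n₃ * t))))
          atTop (nhds (L n₂))) ∧
      Tendsto L atTop
        (nhds (∫ t₁ in (0:ℝ)..1, ∫ t₂ in (0:ℝ)..1, ∫ t₃ in (0:ℝ)..1,
          f (Complex.exp (2 * π * Complex.I * t₁),
             Complex.exp (2 * π * Complex.I * t₂),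
             Complex.exp (2 * π * Complex.I * t₃)))) := by
  refine ⟨fun n₂ => ∫ t in (0:ℝ)..1, ∫ s in (0:ℝ)..1, f (exp (2 * π * I * t),
    exp (2 * π * I * (n₂ * t : ℝ)), exp (2 * π * I * s)), fun n₂ _ => ?_, ?_⟩
  · have h := tendsto_integral_comp_nat_mul (φ := fun p : ℝ × ℝ => f (exp (2 * π * I * p.1),
        exp (2 * π * I * (n₂ * p.1 : ℝ)), exp (2 * π * I * p.2)))
      (hf.comp_exp_two_pi_I_mul (by fun_prop) (by fun_prop) (by fun_prop))
      (fun s t => by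
        simp only [mul_add, mul_one, exp_two_pi_I_mul_add_natCast, exp_two_pi_I_mul_periodic _])
      (fun t s => by simp only [exp_two_pi_I_mul_periodic _])
    push_cast at h ⊢
    exact h
  · have h := tendsto_integral_comp_nat_mul (φ := fun p : ℝ × ℝ => ∫ s in (0:ℝ)..1,
        f (exp (2 * π * I * p.1), exp (2 * π * I * p.2), exp (2 * π * I * s)))
      (intervalIntegral.continuous_parametric_intervalIntegral_of_continuous'
        (hf.comp_exp_two_pi_I_mul (by fun_prop) (by fun_prop) (by fun_prop)) 0 1)
      (fun u t => by simp only [exp_two_pi_I_mul_periodic _])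
      (fun t u => by simp only [exp_two_pi_I_mul_periodic _])
    push_cast at h ⊢
    exact h
end

section
/- Let a ∈ ℂ with 0 < |a| ≤ 2. Then the Lebesgue measure of the set {s ∈ [0,1] : |e^{2πis} + a| < 1} equals arccos(|a|/2)/π. -/
/-!
Write `a = r e^{iθ}`. By the law of cosines `|e^{ix} + a|² = 1 + r² + 2r cos (x - θ)`, so
`|e^{2πis} + a| < 1` exactly when `cos (2πs - θ) < -r/2`. As `s` runs over `[0, 1]`, the angle
`2πs - θ` runs over a full period of `cos`, on which `{cos < c}` is an arc of length
`2π - 2 arccos c`. The measure is therefore `1 - arccos (-r/2) / π = arccos (r/2) / π`.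
-/

open Real MeasureTheory Set

/-- Both sides are the Haar measure of the image of `f ⁻¹' P` in the circle `ℝ ⧸ Tℤ`. -/
theorem Function.Periodic.volume_preimage_inter_Ioc_eq {α : Type*} {f : ℝ → α} {T : ℝ}
    (hf : Function.Periodic f T) (hT : 0 < T) {P : Set α} (hP : MeasurableSet (f ⁻¹' P))
    (t s : ℝ) :
    volume (f ⁻¹' P ∩ Ioc t (t + T)) = volume (f ⁻¹' P ∩ Ioc s (s + T)) := by
  have := Fact.mk hT
  have hU : MeasurableSet (hf.lift ⁻¹' P : Set (AddCircle T)) := measurableSet_quotient.2 hP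
  exact (AddCircle.add_projection_respects_measure T t hU).symm.trans
    (AddCircle.add_projection_respects_measure T s hU)

namespace Complex

theorem re_exp_mul_I_mul_conj (x : ℝ) (a : ℂ) :
    (exp (x * I) * (starRingEnd ℂ) a).re = ‖a‖ * Real.cos (x - arg a) := by
  rw [mul_re, conj_re, conj_im, exp_ofReal_mul_I_re, exp_ofReal_mul_I_im, ← norm_mul_cos_arg a,
    ← norm_mul_sin_arg a, Real.cos_sub]
  ring

theorem norm_exp_mul_I_add_sq (x : ℝ) (a : ℂ) :
    ‖exp (x * I) + a‖ ^ 2 = 1 + ‖a‖ ^ 2 + 2 * ‖a‖ * Real.cos (x - arg a) := by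
  rw [Complex.sq_norm, normSq_add, ← Complex.sq_norm, ← Complex.sq_norm, norm_exp_ofReal_mul_I,
    re_exp_mul_I_mul_conj]
  ring

theorem norm_exp_mul_I_add_lt_one_iff {a : ℂ} (ha : 0 < ‖a‖) (x : ℝ) :
    ‖exp (x * I) + a‖ < 1 ↔ Real.cos (x - arg a) < -(‖a‖ / 2) := by
  rw [← sq_lt_one_iff₀ (norm_nonneg _), norm_exp_mul_I_add_sq]
  constructor <;> intro h <;> nlinarith

end Complex

namespace Real

theorem cos_lt_iff_arccos_lt {x c : ℝ} (hx₀ : 0 ≤ x) (hxπ : x ≤ π) (hc : c ≤ 1) :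
    cos x < c ↔ arccos c < x := by
  conv_rhs => rw [← arccos_cos hx₀ hxπ]
  refine ⟨fun h ↦ arccos_lt_arccos (neg_one_le_cos x) h hc, fun h ↦ ?_⟩
  by_contra! h'
  exact (arccos_le_arccos h').not_gt h

theorem cos_preimage_Iio_inter_Ioc {c : ℝ} (hc : c ≤ 1) :
    cos ⁻¹' Iio c ∩ Ioc 0 (2 * π) = Ioo (arccos c) (2 * π - arccos c) := by
  ext x
  simp only [mem_inter_iff, mem_preimage, mem_Iio, mem_Ioc, mem_Ioo]
  have h₀ := arccos_nonneg c
  have hπ := pi_pos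
  constructor
  · rintro ⟨hcos, hx₀, hx₂⟩
    rcases le_total x π with hx | hx
    · have := (cos_lt_iff_arccos_lt hx₀.le hx hc).1 hcos
      constructor <;> linarith
    · have := (cos_lt_iff_arccos_lt (by linarith) (by linarith) hc).1
        (by rwa [cos_two_pi_sub] : cos (2 * π - x) < c)
      constructor <;> linarith
  · rintro ⟨h₁, h₂⟩
    refine ⟨?_, by linarith, by linarith⟩
    rcases le_total x π with hx | hx
    · exact (cos_lt_iff_arccos_lt (by linarith) hx hc).2 h₁
    · rw [← cos_two_pi_sub]
      exact (cos_lt_iff_arccos_lt (by linarith) (by linarith) hc).2 (by linarith)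

theorem volume_setOf_mem_Icc_cos_lt (θ : ℝ) {c : ℝ} (hc : c ≤ 1) :
    volume {s : ℝ | s ∈ Icc (0 : ℝ) 1 ∧ cos (2 * π * s - θ) < c}
      = ENNReal.ofReal (1 - arccos c / π) := by
  have hπ := pi_pos
  have hset : {s : ℝ | s ∈ Icc (0 : ℝ) 1 ∧ cos (2 * π * s - θ) < c}
      = (2 * π * ·) ⁻¹' ((· + -θ) ⁻¹' (cos ⁻¹' Iio c ∩ Icc (-θ) (-θ + 2 * π))) := by
    ext s
    simp only [mem_ofPred_eq, mem_preimage, mem_inter_iff, mem_Iio, mem_Icc,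
      ← sub_eq_add_neg]
    have h₀ : -θ ≤ 2 * π * s - θ ↔ 0 ≤ s := by
      constructor <;> intro h <;> nlinarith
    have h₁ : 2 * π * s - θ ≤ -θ + 2 * π ↔ s ≤ 1 := by
      constructor <;> intro h <;> nlinarith
    rw [h₀, h₁]
    tauto
  have hcos : MeasurableSet (cos ⁻¹' Iio c) :=
    measurableSet_Iio.preimage continuous_cos.measurable
  rw [hset, volume_preimage_mul_left (by positivity), measure_preimage_add_right,
    measure_congr ((ae_eq_refl _).inter Ioc_ae_eq_Icc).symm,
    cos_periodic.volume_preimage_inter_Ioc_eq two_pi_pos hcos (-θ) 0, zero_add,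
    cos_preimage_Iio_inter_Ioc hc, volume_Ioo, ← ENNReal.ofReal_mul (by positivity)]
  congr 1
  rw [abs_of_pos (by positivity)]
  field_simp
  ring

end Real

theorem measure_exp_add_a_in_unit_disc_general (a : ℂ) (h0 : 0 < ‖a‖) :
    volume {s : ℝ | s ∈ Set.Icc (0:ℝ) 1 ∧
        ‖Complex.exp (2 * π * Complex.I * s) + a‖ < 1}
      = ENNReal.ofReal (Real.arccos (‖a‖ / 2) / π) := by
  have hexp (s : ℝ) : 2 * π * Complex.I * s = (2 * π * s : ℝ) * Complex.I := by
    push_cast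
    ring
  simp_rw [hexp, Complex.norm_exp_mul_I_add_lt_one_iff h0]
  rw [volume_setOf_mem_Icc_cos_lt _ (by linarith), arccos_neg]
  congr 1
  field_simp
  ring

theorem measure_exp_add_a_in_unit_disc (a : ℂ) (h0 : 0 < ‖a‖)
    (h2 : ‖a‖ ≤ 2) :
    volume {s : ℝ | s ∈ Set.Icc (0:ℝ) 1 ∧
        ‖Complex.exp (2 * π * Complex.I * s) + a‖ < 1}
      = ENNReal.ofReal (Real.arccos (‖a‖ / 2) / π) :=
  measure_exp_add_a_in_unit_disc_general a h0
end

section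
/- Let a ∈ ℂ with 0 < |a| ≤ 2. Then the iterated integral ∫_0^1 ∫_0^1 e^{2πit}/(e^{2πit} + e^{2πis} + a) dt ds equals arccos(|a|/2)/π. In the notation of the paper, c(a + x + y) = arccos(|a|/2)/π. -/
/-! For `|b| ≠ 1` the inner integral is `(2πi)⁻¹ ∮_{|z|=1} dz / (z + b)`, i.e. `1` if `|b| < 1` and
`0` if `|b| > 1`. Take `b = e^{2πis} + a`; shifting `s` by `arg a / 2π` replaces `a` by `|a|`, and
`|e^{2πis} + |a||² = 1 + 2|a| cos 2πs + |a|²`. So the outer integrand is, off the null set where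
`cos 2πs = -|a|/2`, the indicator of `cos 2πs < -|a|/2`, an arc of length `arccos(|a|/2)/π`. -/

open Real Complex MeasureTheory Set

theorem Function.Periodic.intervalIntegral_comp_add_right {E : Type*} [NormedAddCommGroup E]
    [NormedSpace ℝ E] {g : ℝ → E} {T : ℝ} (hg : Function.Periodic g T) (φ : ℝ) :
    ∫ s in (0:ℝ)..T, g (s + φ) = ∫ s in (0:ℝ)..T, g s := by
  rw [intervalIntegral.integral_comp_add_right, zero_add, add_comm T,
    hg.intervalIntegral_add_eq φ 0, zero_add]

theorem circleIntegral_zero_one_eq_integral (f : ℂ → ℂ) :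
    (∮ z in C(0, 1), f z) =
      2 * π * I * ∫ t in (0:ℝ)..1, exp (2 * π * I * t) * f (exp (2 * π * I * t)) := by
  have h := intervalIntegral.integral_comp_mul_left (a := 0) (b := 1)
    (fun θ => deriv (circleMap 0 1) θ • f (circleMap 0 1 θ)) two_pi_pos.ne'
  simp only [mul_zero, mul_one] at h
  rw [circleIntegral, ← smul_inv_smul₀ two_pi_pos.ne' (∫ θ in (0:ℝ)..2 * π, _), ← h,
    real_smul, ← intervalIntegral.integral_const_mul, ← intervalIntegral.integral_const_mul]
  congr 1 with t
  simp only [deriv_circleMap, circleMap, smul_eq_mul]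
  push_cast
  ring_nf

theorem integral_exp_div_exp_add {b : ℂ} (hb : ‖b‖ ≠ 1) :
    ∫ t in (0:ℝ)..1, exp (2 * π * I * t) / (exp (2 * π * I * t) + b) =
      if ‖b‖ < 1 then 1 else 0 := by
  have hcirc := circleIntegral_zero_one_eq_integral fun z => (z - -b)⁻¹
  have h2πI : (2 * π * I : ℂ) ≠ 0 := by simp [pi_ne_zero, I_ne_zero]
  rcases hb.lt_or_gt with hlt | hgt
  · rw [circleIntegral.integral_sub_inv_of_mem_ball (by simpa using hlt)] at hcirc
    simp only [sub_neg_eq_add, ← div_eq_mul_inv] at hcirc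
    rw [if_pos hlt]
    exact (mul_eq_left₀ h2πI).mp hcirc.symm
  · have hzero : (∮ z in C(0, 1), (z - -b)⁻¹) = 0 := by
      refine DiffContOnCl.circleIntegral_eq_zero zero_le_one
        (DifferentiableOn.diffContOnCl ?_)
      refine (differentiableOn_id.sub_const (-b)).inv fun z hz h => ?_
      rw [closure_ball 0 one_ne_zero, mem_closedBall_zero_iff, show z = -b from sub_eq_zero.mp h,
        norm_neg] at hz
      exact hgt.not_ge hz
    rw [hzero] at hcirc
    simp only [sub_neg_eq_add, ← div_eq_mul_inv] at hcirc
    rw [if_neg hgt.not_gt]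
    simpa [h2πI] using hcirc.symm

theorem norm_exp_add_ofReal_sq (s r : ℝ) :
    ‖exp (2 * π * I * s) + r‖ ^ 2 = 1 + 2 * r * Real.cos (2 * π * s) + r ^ 2 := by
  rw [show (2 * π * I * s : ℂ) = ((2 * π * s : ℝ) : ℂ) * I by push_cast; ring,
    Complex.sq_norm, normSq_apply]
  simp only [add_re, add_im, exp_ofReal_mul_I_re, exp_ofReal_mul_I_im, ofReal_re, ofReal_im,
    add_zero]
  linear_combination Real.sin_sq_add_cos_sq (2 * π * s)

theorem norm_exp_add_ofReal_lt_one_iff {r : ℝ} (hr : 0 < r) (s : ℝ) :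
    ‖exp (2 * π * I * s) + r‖ < 1 ↔ Real.cos (2 * π * s) < -(r / 2) := by
  rw [← sq_lt_one_iff₀ (norm_nonneg _), norm_exp_add_ofReal_sq]
  constructor <;> intro h <;> nlinarith

theorem norm_exp_add_ofReal_eq_one_iff {r : ℝ} (hr : 0 < r) (s : ℝ) :
    ‖exp (2 * π * I * s) + r‖ = 1 ↔ Real.cos (2 * π * s) = -(r / 2) := by
  rw [← pow_eq_one_iff_of_nonneg (norm_nonneg _) two_ne_zero, norm_exp_add_ofReal_sq]
  constructor <;> intro h
  · exact mul_left_cancel₀ hr.ne' (by linear_combination h / 2)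
  · rw [h]; ring

theorem norm_exp_add_arg_div_add (a : ℂ) (s : ℝ) :
    ‖exp (2 * π * I * ↑(s + arg a / (2 * π))) + a‖ = ‖exp (2 * π * I * s) + ‖a‖‖ := by
  have hrot : exp (2 * π * I * ↑(s + arg a / (2 * π))) + a =
      exp (arg a * I) * (exp (2 * π * I * s) + ‖a‖) := by
    have hπ : (π : ℂ) ≠ 0 := ofReal_ne_zero.mpr pi_ne_zero
    rw [show 2 * π * I * ↑(s + arg a / (2 * π)) = 2 * π * I * s + arg a * I by
      push_cast; field_simp, Complex.exp_add]
    linear_combination -norm_mul_exp_arg_mul_I a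
  rw [hrot, norm_mul, norm_exp_ofReal_mul_I, one_mul]

theorem countable_setOf_cos_eq (y : ℝ) : {θ : ℝ | Real.cos θ = y}.Countable := by
  refine ((countable_range fun k : ℤ => 2 * k * π + arccos y).union
    (countable_range fun k : ℤ => 2 * k * π - arccos y)).mono fun θ (hθ : Real.cos θ = y) => ?_
  have hy : Real.cos (arccos y) = Real.cos θ := by
    rw [cos_arccos] <;> linarith [neg_one_le_cos θ, cos_le_one θ]
  obtain ⟨k, hk | hk⟩ := Real.cos_eq_cos_iff.mp hy
  · exact Or.inl ⟨k, hk.symm⟩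
  · exact Or.inr ⟨k, hk.symm⟩

theorem ae_cos_two_pi_mul_ne (y : ℝ) : ∀ᵐ s : ℝ, Real.cos (2 * π * s) ≠ y := by
  have hinj : Function.Injective fun s : ℝ => 2 * π * s := mul_right_injective₀ two_pi_pos.ne'
  exact ae_iff.mpr (measure_mono_null (fun s hs => not_not.mp hs)
    (((countable_setOf_cos_eq y).preimage_of_injOn hinj.injOn).measure_zero volume))

theorem cos_lt_cos_iff_of_mem_Ioo {c θ : ℝ} (hc : c ∈ Icc 0 π) (hθ : θ ∈ Ioo 0 (2 * π)) :
    Real.cos θ < Real.cos c ↔ θ ∈ Ioo c (2 * π - c) := by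
  obtain ⟨hc0, hcπ⟩ := hc
  obtain ⟨hθ0, hθ2π⟩ := hθ
  rcases le_or_gt θ π with hθπ | hπθ
  · rw [strictAntiOn_cos.lt_iff_gt ⟨hθ0.le, hθπ⟩ ⟨hc0, hcπ⟩]
    exact ⟨fun h => ⟨h, by linarith⟩, And.left⟩
  · rw [← Real.cos_two_pi_sub θ,
      strictAntiOn_cos.lt_iff_gt ⟨by linarith, by linarith⟩ ⟨hc0, hcπ⟩]
    exact ⟨fun h => ⟨by linarith, by linarith⟩, fun h => by linarith [h.2]⟩

theorem Ioo_inter_setOf_cos_lt_cos {c : ℝ} (hc : c ∈ Icc 0 π) :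
    Ioo 0 (2 * π) ∩ {θ | Real.cos θ < Real.cos c} = Ioo c (2 * π - c) := by
  ext θ
  refine ⟨fun ⟨hθ, hlt⟩ => (cos_lt_cos_iff_of_mem_Ioo hc hθ).mp hlt, fun hθ => ?_⟩
  have hθ' : θ ∈ Ioo 0 (2 * π) := ⟨by linarith [hc.1, hθ.1], by linarith [hc.1, hθ.2]⟩
  exact ⟨hθ', (cos_lt_cos_iff_of_mem_Ioo hc hθ').mpr hθ⟩

theorem integral_indicator_cos_two_pi_mul_lt_cos {c : ℝ} (hc : c ∈ Icc 0 π) :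
    ∫ s in (0:ℝ)..1, {θ | Real.cos θ < Real.cos c}.indicator (1 : ℝ → ℂ) (2 * π * s) =
      ((1 - c / π : ℝ) : ℂ) := by
  rw [intervalIntegral.integral_comp_mul_left (fun θ => _) two_pi_pos.ne', mul_zero, mul_one,
    intervalIntegral.integral_of_le two_pi_pos.le, integral_Ioc_eq_integral_Ioo,
    setIntegral_indicator (measurableSet_lt Real.continuous_cos.measurable measurable_const),
    Ioo_inter_setOf_cos_lt_cos hc, Pi.one_def, setIntegral_const,
    volume_real_Ioo_of_le (by linarith [hc.2]), real_smul, real_smul, mul_one]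
  push_cast
  field_simp
  ring

theorem c_of_a_add_x_add_y (a : ℂ) (h0 : 0 < ‖a‖)
    (h2 : ‖a‖ ≤ 2) :
    (∫ s in (0:ℝ)..1, ∫ t in (0:ℝ)..1,
        Complex.exp (2 * π * Complex.I * t) /
          (Complex.exp (2 * π * Complex.I * t) +
            Complex.exp (2 * π * Complex.I * s) + a))
      = ((Real.arccos (‖a‖ / 2) / π : ℝ) : ℂ) := by
  set c := π - arccos (‖a‖ / 2)
  have hc : Real.cos c = -(‖a‖ / 2) := by
    rw [Real.cos_pi_sub, cos_arccos (by linarith) (by linarith)]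
  have hper : Function.Periodic (fun s : ℝ => ∫ t in (0:ℝ)..1,
      exp (2 * π * I * t) / (exp (2 * π * I * t) + (exp (2 * π * I * s) + a))) 1 := by
    intro s
    simp only [ofReal_add, ofReal_one, mul_add, mul_one, Complex.exp_add, exp_two_pi_mul_I]
  calc _ = ∫ s in (0:ℝ)..1, ∫ t in (0:ℝ)..1,
        exp (2 * π * I * t) / (exp (2 * π * I * t) + (exp (2 * π * I * s) + a)) := by
        simp only [add_assoc]
    _ = ∫ s in (0:ℝ)..1, ∫ t in (0:ℝ)..1, exp (2 * π * I * t) /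
        (exp (2 * π * I * t) + (exp (2 * π * I * ↑(s + arg a / (2 * π))) + a)) :=
        (hper.intervalIntegral_comp_add_right _).symm
    _ = ∫ s in (0:ℝ)..1, {θ | Real.cos θ < Real.cos c}.indicator (1 : ℝ → ℂ) (2 * π * s) := by
        refine intervalIntegral.integral_congr_ae ?_
        filter_upwards [ae_cos_two_pi_mul_ne (-(‖a‖ / 2))] with s hs _
        rw [integral_exp_div_exp_add (by rwa [norm_exp_add_arg_div_add,
          Ne, norm_exp_add_ofReal_eq_one_iff h0])]
        simp only [norm_exp_add_arg_div_add, norm_exp_add_ofReal_lt_one_iff h0, indicator_apply,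
          mem_ofPred_eq, hc, Pi.one_apply]
    _ = ((arccos (‖a‖ / 2) / π : ℝ) : ℂ) := by
        rw [integral_indicator_cos_two_pi_mul_lt_cos ⟨by linarith [arccos_le_pi (‖a‖ / 2)],
          by linarith [arccos_nonneg (‖a‖ / 2)]⟩]
        congr 1
        field_simp
        ring
end

section
/- The iterated integral ∫_0^1 ∫_0^1 e^{2πit}/(e^{2πit} + e^{2πis} + 1) dt ds equals 1/3. In the notation of the paper, c(1 + x + y) = 1/3. -/
open Real Complex MeasureTheory

/-!
Writing `z = e^{2πit}`, the inner integral `∫₀¹ e^{2πit} / (e^{2πit} + c) dt` is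
`(2πi)⁻¹ ∮_{|z|=1} dz / (z + c)`, the winding number of the unit circle around `-c`: it is `1`
for `‖c‖ < 1` and `0` for `‖c‖ > 1`. For `c = e^{2πis} + 1` we have `‖c‖ = 2 |cos πs|`, so for
`s ∈ (0, 1]` outside the null set `{1/3, 2/3}` the inner integral is the indicator of
`(1/3, 2/3)`, whose integral is `1/3`.
-/

open Set

theorem integral_exp_div_exp_add_eq_circleIntegral (c : ℂ) :
    ∫ t in (0:ℝ)..1, exp (2 * π * I * t) / (exp (2 * π * I * t) + c) =
      (2 * π * I)⁻¹ * ∮ z in C(0, 1), (z + c)⁻¹ := by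
  have h_integrand (t : ℝ) :
      deriv (circleMap 0 1) (2 * π * t) • (circleMap 0 1 (2 * π * t) + c)⁻¹ =
        I * (exp (2 * π * I * t) / (exp (2 * π * I * t) + c)) := by
    simp only [deriv_circleMap, circleMap_zero, smul_eq_mul]
    push_cast
    ring_nf
  have h_subst := intervalIntegral.smul_integral_comp_mul_left (a := 0) (b := 1)
    (fun θ => deriv (circleMap 0 1) θ • (circleMap 0 1 θ + c)⁻¹) (2 * π)
  simp only [h_integrand, intervalIntegral.integral_const_mul, mul_zero, mul_one] at h_subst
  rw [circleIntegral, ← h_subst, real_smul]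
  field_simp
  push_cast
  ring

theorem integral_exp_div_exp_add_of_norm_lt {c : ℂ} (hc : ‖c‖ < 1) :
    ∫ t in (0:ℝ)..1, exp (2 * π * I * t) / (exp (2 * π * I * t) + c) = 1 := by
  have h_mem : -c ∈ Metric.ball (0 : ℂ) 1 := by simpa using hc
  have h_winding := circleIntegral.integral_sub_inv_of_mem_ball h_mem
  simp only [sub_neg_eq_add] at h_winding
  rw [integral_exp_div_exp_add_eq_circleIntegral, h_winding,
    inv_mul_cancel₀ (by simp [pi_ne_zero])]

theorem integral_exp_div_exp_add_of_one_lt_norm {c : ℂ} (hc : 1 < ‖c‖) :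
    ∫ t in (0:ℝ)..1, exp (2 * π * I * t) / (exp (2 * π * I * t) + c) = 0 := by
  rw [integral_exp_div_exp_add_eq_circleIntegral,
    DiffContOnCl.circleIntegral_eq_zero zero_le_one, mul_zero]
  refine DifferentiableOn.diffContOnCl ?_
  rw [closure_ball _ one_ne_zero]
  refine (differentiableOn_id.add_const c).inv fun z hz h_zero => ?_
  have : ‖c‖ ≤ 1 := by
    rw [eq_neg_of_add_eq_zero_right h_zero, norm_neg]
    simpa using hz
  linarith

theorem exp_two_pi_mul_I_add_one (s : ℝ) :
    exp (2 * π * I * s) + 1 = exp (π * I * s) * (2 * Complex.cos (π * s)) := by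
  rw [two_cos, mul_add, ← Complex.exp_add, ← Complex.exp_add]
  ring_nf
  rw [Complex.exp_zero, add_comm]

theorem norm_exp_two_pi_mul_I_add_one (s : ℝ) :
    ‖exp (2 * π * I * s) + 1‖ = 2 * |Real.cos (π * s)| := by
  rw [exp_two_pi_mul_I_add_one, norm_mul, norm_mul, ← ofReal_mul, ← ofReal_cos, norm_real,
    mul_right_comm, ← ofReal_mul, norm_exp_ofReal_mul_I]
  simp

theorem cos_pi_mul_one_third : Real.cos (π * (1/3)) = 1/2 := by
  rw [mul_one_div, cos_pi_div_three]

theorem cos_pi_mul_two_thirds : Real.cos (π * (2/3)) = -(1/2) := by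
  rw [show π * (2/3) = π - π / 3 by ring, Real.cos_pi_sub, cos_pi_div_three]

theorem abs_cos_pi_mul_lt_half {s : ℝ} (hs : s ∈ Ioo (1/3 : ℝ) (2/3)) :
    |Real.cos (π * s)| < 1/2 := by
  obtain ⟨h_lo, h_hi⟩ := hs
  have h_lt : Real.cos (π * s) < Real.cos (π * (1/3)) :=
    Real.cos_lt_cos_of_nonneg_of_le_pi (by positivity) (by nlinarith [pi_pos]) (by gcongr)
  have h_gt : Real.cos (π * (2/3)) < Real.cos (π * s) :=
    Real.cos_lt_cos_of_nonneg_of_le_pi (by nlinarith [pi_pos]) (by nlinarith [pi_pos]) (by gcongr)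
  rw [cos_pi_mul_one_third] at h_lt
  rw [cos_pi_mul_two_thirds] at h_gt
  exact abs_lt.mpr ⟨h_gt, h_lt⟩

theorem half_lt_abs_cos_pi_mul {s : ℝ} (hs : s ∈ Icc (0 : ℝ) 1 \ Icc (1/3) (2/3)) :
    1/2 < |Real.cos (π * s)| := by
  obtain ⟨⟨h_nonneg, h_le_one⟩, h_out⟩ := hs
  rcases lt_or_ge s (1/3) with h_lo | h_lo
  · have h_gt : Real.cos (π * (1/3)) < Real.cos (π * s) :=
      Real.cos_lt_cos_of_nonneg_of_le_pi (by positivity) (by nlinarith [pi_pos]) (by gcongr)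
    rw [cos_pi_mul_one_third] at h_gt
    exact h_gt.trans_le (le_abs_self _)
  · have h_hi : 2/3 < s := lt_of_not_ge fun h => h_out ⟨h_lo, h⟩
    have h_lt : Real.cos (π * s) < Real.cos (π * (2/3)) :=
      Real.cos_lt_cos_of_nonneg_of_le_pi (by positivity) (by nlinarith [pi_pos]) (by gcongr)
    rw [cos_pi_mul_two_thirds] at h_lt
    exact (lt_neg.mpr h_lt).trans_le (neg_le_abs _)

theorem integral_exp_div_exp_add_exp_add_one_eq_indicator {s : ℝ} (hs : s ∈ Icc (0 : ℝ) 1)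
    (h_ne_third : s ≠ 1/3) (h_ne_two_thirds : s ≠ 2/3) :
    ∫ t in (0:ℝ)..1, exp (2 * π * I * t) / (exp (2 * π * I * t) + exp (2 * π * I * s) + 1) =
      (Ioo (1/3 : ℝ) (2/3)).indicator 1 s := by
  simp only [add_assoc]
  by_cases h_mid : s ∈ Ioo (1/3 : ℝ) (2/3)
  · rw [indicator_of_mem h_mid, Pi.one_apply]
    refine integral_exp_div_exp_add_of_norm_lt ?_
    rw [norm_exp_two_pi_mul_I_add_one]
    linarith [abs_cos_pi_mul_lt_half h_mid]
  · have h_out : s ∈ Icc (0 : ℝ) 1 \ Icc (1/3) (2/3) := by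
      refine ⟨hs, fun h => h_mid ⟨?_, ?_⟩⟩
      exacts [lt_of_le_of_ne h.1 h_ne_third.symm, lt_of_le_of_ne h.2 h_ne_two_thirds]
    rw [indicator_of_notMem h_mid]
    refine integral_exp_div_exp_add_of_one_lt_norm ?_
    rw [norm_exp_two_pi_mul_I_add_one]
    linarith [half_lt_abs_cos_pi_mul h_out]

theorem c_of_one_add_x_add_y :
    (∫ s in (0:ℝ)..1, ∫ t in (0:ℝ)..1,
        Complex.exp (2 * π * Complex.I * t) /
          (Complex.exp (2 * π * Complex.I * t) +
            Complex.exp (2 * π * Complex.I * s) + 1))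
      = 1 / 3 := by
  have h_inner : ∀ᵐ s : ℝ, s ∈ uIoc (0:ℝ) 1 →
      (∫ t in (0:ℝ)..1, exp (2 * π * I * t) / (exp (2 * π * I * t) + exp (2 * π * I * s) + 1))
        = (Ioo (1/3 : ℝ) (2/3)).indicator 1 s := by
    filter_upwards [volume.ae_ne (1/3), volume.ae_ne (2/3)] with s h_ne_third h_ne_two_thirds hs
    rw [uIoc_of_le zero_le_one] at hs
    exact integral_exp_div_exp_add_exp_add_one_eq_indicator (Ioc_subset_Icc_self hs)
      h_ne_third h_ne_two_thirds
  have h_mid_sub : Ioo (1/3 : ℝ) (2/3) ⊆ Ioc 0 1 := fun x hx =>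
    ⟨by linarith [hx.1], by linarith [hx.2]⟩
  rw [intervalIntegral.integral_congr_ae h_inner, intervalIntegral.integral_of_le zero_le_one,
    setIntegral_indicator measurableSet_Ioo, inter_eq_self_of_subset_right h_mid_sub,
    Pi.one_def, setIntegral_const, Real.volume_real_Ioo_of_le (by norm_num)]
  norm_num
end
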